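/- Let (X,d,m) be a metric measure space admitting the generalized asymptotic volume ratio AVR^V associated to V, and suppose there exists k > 0 such that m(B_r(x)) ≤ k V(r) for every x ∈ X and every sufficiently large r > 0. Let (ρ_n)_{n∈ℕ} be mollifiers of radial type satisfying the approximation of the identity associated to V (Condition 3). Then for every x ∈ X, lim_{R→∞} limsup_{n→∞} ∫_{{y : d(x,y) ≥ R}} ρ_n(x,y) dm(y) = lim_{R→∞} liminf_{n→∞} ∫_{{y : d(x,y) ≥ R}} ρ_n(x,y) dm(y) = AVR^V. -/

import Mathlib

/-!
Write `T_n(R) = ∫_{d(x,·) ≥ R} ρ̃_n(d(x,·)) dm`. As `ρ̃_n` decreases to `0` at infinity, the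
layer-cake formula writes both `T_n(R)` and `∫_R^∞ V' ρ̃_n` as integrals over the levels of
`ρ̃_n` of the masses of the closed annuli `{R ≤ d(x,·) ≤ s}` and of the intervals `[R, s]`, that
is, of `m(B_s) - m(B_R)` and of `V(s) - V(R)`. Hence, if `a V ≤ m(B_·) ≤ b V` beyond `R`,
  `a ∫_R^∞ V' ρ̃_n - m(B_R) ρ̃_n(R) ≤ T_n(R) ≤ b (∫_R^∞ V' ρ̃_n + V(R) ρ̃_n(R))`.
Letting `n → ∞` kills the boundary terms and turns `∫_R^∞ V' ρ̃_n` into `I(R)`; letting `R → ∞`,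
with `a < AVR < b` arbitrary and `I(R) → 1`, squeezes both iterated limits to `AVR`.
-/

open MeasureTheory Filter Topology Metric Set ENNReal

theorem AntitoneOn.le_of_tendsto_atTop {α β : Type*} [SemilatticeSup α] [Nonempty α] [Preorder β]
    [TopologicalSpace β] [OrderClosedTopology β] {g : α → β} {a : α} {b : β}
    (hg : AntitoneOn g (Ici a)) (hlim : Tendsto g atTop (𝓝 b)) : b ≤ g a :=
  le_of_tendsto hlim ((eventually_ge_atTop a).mono fun _ h => hg self_mem_Ici h h)

theorem tendsto_zero_of_tendsto_mul_atTop {α : Type*} {l : Filter α} {f g : α → ℝ}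
    (hfg : Tendsto (fun x => f x * g x) l (𝓝 0)) (hg : Tendsto g l atTop) :
    Tendsto f l (𝓝 0) := by
  have h := hfg.mul hg.inv_tendsto_atTop
  rw [zero_mul] at h
  refine h.congr' ?_
  filter_upwards [hg.eventually_gt_atTop 0] with x hx
  simp [hx.ne']

theorem tendsto_lintegral_ofReal_of_tendsto_integral {ι α : Type*} [MeasurableSpace α]
    {μ : Measure α} {l : Filter ι} {f : ι → α → ℝ} {c : ℝ} (hf : ∀ i, 0 ≤ᵐ[μ] f i)
    (h : Tendsto (fun i => ∫ a, f i a ∂μ) l (𝓝 c)) (hc : c ≠ 0) :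
    Tendsto (fun i => ∫⁻ a, ENNReal.ofReal (f i a) ∂μ) l (𝓝 (ENNReal.ofReal c)) := by
  refine (ENNReal.tendsto_ofReal h).congr' ?_
  -- a non-integrable `f i` has Bochner integral `0`, which is eventually excluded by `c ≠ 0`
  filter_upwards [h.eventually_ne hc] with i hi
  have hint : Integrable (f i) μ := by
    by_contra hnot
    exact hi (integral_undef hnot)
  exact ofReal_integral_eq_lintegral_ofReal hint (hf i)

theorem ENNReal.tendsto_of_eventually_mul_le {α : Type*} {l : Filter α} {L u : α → ℝ≥0∞}
    {c : ℝ≥0∞} (hu : Tendsto u l (𝓝 1)) (hlow : ∀ a < c, ∀ᶠ x in l, a * u x ≤ L x)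
    (hup : ∀ b > c, b ≠ ∞ → ∀ᶠ x in l, L x ≤ b * u x) : Tendsto L l (𝓝 c) := by
  have hmul : ∀ a : ℝ≥0∞, Tendsto (fun x => a * u x) l (𝓝 a) := fun a => by
    simpa using ENNReal.Tendsto.const_mul hu (Or.inl one_ne_zero)
  refine tendsto_order.2 ⟨fun a' ha' => ?_, fun b' hb' => ?_⟩
  · obtain ⟨a, ha'a, hac⟩ := exists_between ha'
    filter_upwards [(hmul a).eventually (eventually_gt_nhds ha'a), hlow a hac] with x h1 h2
    exact h1.trans_le h2
  · obtain ⟨b, hcb, hbb'⟩ := exists_between hb'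
    filter_upwards [(hmul b).eventually (eventually_lt_nhds hbb'), hup b hcb hbb'.ne_top]
      with x h1 h2
    exact h2.trans_lt h1

theorem ENNReal.eventually_le_mul_of_tendsto_div {α : Type*} {l : Filter α} {f g : α → ℝ≥0∞}
    {c b : ℝ≥0∞} (h : Tendsto (fun x => f x / g x) l (𝓝 c)) (hcb : c < b) (hb : b ≠ ∞)
    (hg : ∀ x, g x ≠ ∞) : ∀ᶠ x in l, f x ≤ b * g x :=
  (h.eventually (eventually_lt_nhds hcb)).mono fun x hx =>
    (ENNReal.div_le_iff_le_mul (Or.inr hb) (Or.inl (hg x))).1 hx.le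

theorem ENNReal.eventually_mul_le_of_tendsto_div {α : Type*} {l : Filter α} {f g : α → ℝ≥0∞}
    {c a : ℝ≥0∞} (h : Tendsto (fun x => f x / g x) l (𝓝 c)) (hac : a < c) :
    ∀ᶠ x in l, a * g x ≤ f x :=
  (h.eventually (eventually_gt_nhds hac)).mono fun _ hx => ENNReal.mul_le_of_le_div hx.le

theorem exists_setOf_le_inter_Ici_eq_Icc {g : ℝ → ℝ} {R t : ℝ} (hg : ContinuousOn g (Ici R))
    (hg_anti : StrictAntiOn g (Ici R)) (hg_top : Tendsto g atTop (𝓝 0)) (ht : 0 < t)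
    (htR : t ≤ g R) : ∃ s, R ≤ s ∧ {r | t ≤ g r} ∩ Ici R = Icc R s := by
  obtain ⟨M, hRM, hM⟩ :=
    ((eventually_ge_atTop R).and (hg_top.eventually (eventually_lt_nhds ht))).exists
  obtain ⟨s, ⟨hRs, -⟩, hgs⟩ :=
    intermediate_value_Icc' hRM (hg.mono Icc_subset_Ici_self) ⟨hM.le, htR⟩
  refine ⟨s, hRs, Set.ext fun r => ?_⟩
  simp only [mem_inter_iff, mem_ofPred_eq, mem_Icc]
  rw [and_comm]
  refine and_congr_right fun hr => ?_
  rw [← hgs, hg_anti.le_iff_ge (mem_Ici.2 hRs) (mem_Ici.2 hr)]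

theorem lintegral_Ici_le_of_measure_Icc_le {ν₁ ν₂ : Measure ℝ} {g : ℝ → ℝ} {R : ℝ} {c : ℝ≥0∞}
    (hg : ContinuousOn g (Ici R)) (hg_anti : StrictAntiOn g (Ici R))
    (hg_top : Tendsto g atTop (𝓝 0)) (h : ∀ s, R ≤ s → ν₁ (Icc R s) ≤ ν₂ (Icc R s) + c) :
    ∫⁻ r in Ici R, ENNReal.ofReal (g r) ∂ν₁
      ≤ ∫⁻ r in Ici R, ENNReal.ofReal (g r) ∂ν₂ + c * ENNReal.ofReal (g R) := by
  -- By the layer-cake formula; the superlevel sets of `g` in `[R, ∞)` are the intervals `[R, s]`.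
  have hg_nonneg : ∀ r ∈ Ici R, 0 ≤ g r := fun r hr =>
    (hg_anti.antitoneOn.mono (Ici_subset_Ici.2 hr)).le_of_tendsto_atTop hg_top
  have layer_cake : ∀ ν : Measure ℝ, ∫⁻ r in Ici R, ENNReal.ofReal (g r) ∂ν
      = ∫⁻ t in Ioi 0, ν ({r | t ≤ g r} ∩ Ici R) := fun ν => by
    rw [lintegral_eq_lintegral_meas_le _
      ((ae_restrict_iff' measurableSet_Ici).2 (ae_of_all _ hg_nonneg))
      (hg.aemeasurable measurableSet_Ici)]
    simp only [Measure.restrict_apply' measurableSet_Ici]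
  have hconst : c * ENNReal.ofReal (g R) = ∫⁻ t in Ioi 0, (Iic (g R)).indicator (fun _ => c) t := by
    rw [lintegral_indicator measurableSet_Iic, setLIntegral_const,
      Measure.restrict_apply measurableSet_Iic, Iic_inter_Ioi, Real.volume_Ioc, sub_zero]
  rw [layer_cake, layer_cake, hconst,
    ← lintegral_add_right _ (measurable_const.indicator measurableSet_Iic)]
  refine setLIntegral_mono' measurableSet_Ioi fun t ht => ?_
  by_cases htR : t ≤ g R
  · obtain ⟨s, hRs, hs⟩ := exists_setOf_le_inter_Ici_eq_Icc hg hg_anti hg_top ht htR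
    rw [hs, indicator_of_mem (mem_Iic.2 htR)]
    exact h s hRs
  · have hempty : {r | t ≤ g r} ∩ Ici R = ∅ := by
      refine eq_empty_of_forall_notMem fun r ⟨htr, hr⟩ => htR ?_
      exact htr.trans (hg_anti.antitoneOn self_mem_Ici hr hr)
    simp [hempty]

section Growth

variable {V : ℝ → ℝ} {R s : ℝ}

theorem deriv_nonneg_of_monotoneOn_Ioi (hV : MonotoneOn V (Ioi 0)) {r : ℝ} (hr : 0 < r) :
    0 ≤ deriv V r := by
  rw [← derivWithin_of_isOpen isOpen_Ioi hr]
  exact hV.derivWithin_nonneg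

theorem withDensity_deriv_Icc (hV : ContDiffOn ℝ 1 V (Ioi 0)) (hV_mono : MonotoneOn V (Ioi 0))
    (hR : 0 < R) (hRs : R ≤ s) :
    volume.withDensity (fun r => ENNReal.ofReal (deriv V r)) (Icc R s)
      = ENNReal.ofReal (V s - V R) := by
  have hIcc : Icc R s ⊆ Ioi 0 := fun r hr => hR.trans_le hr.1
  have hV' : ContinuousOn (deriv V) (Icc R s) :=
    (hV.continuousOn_deriv_of_isOpen isOpen_Ioi le_rfl).mono hIcc
  have hftc : ∫ r in R..s, deriv V r = V s - V R := by
    refine intervalIntegral.integral_deriv_eq_sub (fun r hr => ?_)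
      (hV'.intervalIntegrable_of_Icc hRs)
    rw [uIcc_of_le hRs] at hr
    exact (hV.differentiableOn one_ne_zero).differentiableAt (Ioi_mem_nhds (hIcc hr))
  rw [withDensity_apply _ measurableSet_Icc, ← ofReal_integral_eq_lintegral_ofReal
    hV'.integrableOn_Icc ((ae_restrict_iff' measurableSet_Icc).2 (ae_of_all _ fun r hr =>
      deriv_nonneg_of_monotoneOn_Ioi hV_mono (hIcc hr))),
    integral_Icc_eq_integral_Ioc, ← intervalIntegral.integral_of_le hRs, hftc]

theorem setLIntegral_withDensity_deriv_Ici (hV_mono : MonotoneOn V (Ioi 0)) (hR : 0 < R)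
    (g : ℝ → ℝ) :
    ∫⁻ r in Ici R, ENNReal.ofReal (g r) ∂volume.withDensity (fun r => ENNReal.ofReal (deriv V r))
      = ∫⁻ r in Ioi R, ENNReal.ofReal (deriv V r * g r) := by
  rw [restrict_withDensity measurableSet_Ici, lintegral_withDensity_eq_lintegral_mul_non_measurable
    _ (measurable_deriv V).ennreal_ofReal (ae_of_all _ fun _ => ofReal_lt_top),
    ← setLIntegral_congr Ioi_ae_eq_Ici]
  refine setLIntegral_congr_fun measurableSet_Ioi fun r hr => ?_
  exact (ofReal_mul (deriv_nonneg_of_monotoneOn_Ioi hV_mono (hR.trans hr))).symm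

end Growth

section TailEstimates

variable {X : Type*} [PseudoMetricSpace X] [MeasurableSpace X]
  {μ : Measure X} {x : X} {V : ℝ → ℝ} {R s : ℝ}

theorem measure_closedBall_le_of_forall_gt {b : ℝ≥0∞} (hb : b ≠ ∞) (hV : ContinuousAt V s)
    (h : ∀ s' > s, μ (ball x s') ≤ b * ENNReal.ofReal (V s')) :
    μ (closedBall x s) ≤ b * ENNReal.ofReal (V s) := by
  have hlim : Tendsto (fun s' => b * ENNReal.ofReal (V s')) (𝓝[>] s)
      (𝓝 (b * ENNReal.ofReal (V s))) :=
    ENNReal.Tendsto.const_mul ((ENNReal.continuous_ofReal.continuousAt.comp hV).tendsto.mono_left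
      nhdsWithin_le_nhds) (Or.inr hb)
  refine ge_of_tendsto hlim ?_
  filter_upwards [self_mem_nhdsWithin] with s' hs'
  exact (measure_mono (closedBall_subset_ball hs')).trans (h s' hs')

variable [OpensMeasurableSpace X]

theorem measurable_dist_left (x : X) : Measurable (dist x) :=
  (continuous_const.dist continuous_id).measurable

theorem setLIntegral_map_dist_Ici {g : ℝ → ℝ} (hg : ContinuousOn g (Ici R)) :
    ∫⁻ r in Ici R, ENNReal.ofReal (g r) ∂μ.map (dist x)
      = ∫⁻ y in {y | R ≤ dist x y}, ENNReal.ofReal (g (dist x y)) ∂μ := by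
  have hg_meas := (hg.aemeasurable (μ := μ.map (dist x)) measurableSet_Ici).ennreal_ofReal
  rw [Measure.restrict_map (measurable_dist_left x) measurableSet_Ici] at hg_meas ⊢
  exact lintegral_map' hg_meas (measurable_dist_left x).aemeasurable

theorem tail_lintegral_le {g : ℝ → ℝ} {b : ℝ≥0∞} (hV : ContDiffOn ℝ 1 V (Ioi 0))
    (hV_mono : MonotoneOn V (Ioi 0)) (hR : 0 < R) (hVR : 0 ≤ V R) (hb : b ≠ ∞)
    (hup : ∀ s ≥ R, μ (ball x s) ≤ b * ENNReal.ofReal (V s))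
    (hg : ContinuousOn g (Ici R)) (hg_anti : StrictAntiOn g (Ici R))
    (hg_top : Tendsto g atTop (𝓝 0)) :
    ∫⁻ y in {y | R ≤ dist x y}, ENNReal.ofReal (g (dist x y)) ∂μ
      ≤ b * (∫⁻ r in Ioi R, ENNReal.ofReal (deriv V r * g r))
        + b * ENNReal.ofReal (V R) * ENNReal.ofReal (g R) := by
  have hIcc : ∀ s, R ≤ s → μ.map (dist x) (Icc R s)
      ≤ (b • volume.withDensity (fun r => ENNReal.ofReal (deriv V r))) (Icc R s)
        + b * ENNReal.ofReal (V R) := fun s hRs => by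
    have hVRs : V R ≤ V s := hV_mono hR (hR.trans_le hRs) hRs
    rw [Measure.map_apply (measurable_dist_left x) measurableSet_Icc, Measure.smul_apply,
      smul_eq_mul, withDensity_deriv_Icc hV hV_mono hR hRs, ← mul_add,
      ← ofReal_add (sub_nonneg.2 hVRs) hVR, sub_add_cancel]
    calc μ (dist x ⁻¹' Icc R s) ≤ μ (closedBall x s) :=
          measure_mono fun y hy => mem_closedBall'.2 hy.2
      _ ≤ b * ENNReal.ofReal (V s) :=
          measure_closedBall_le_of_forall_gt hb
            (hV.continuousOn.continuousAt (Ioi_mem_nhds (hR.trans_le hRs)))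
            fun s' hs' => hup s' (hRs.trans hs'.le)
  have h := lintegral_Ici_le_of_measure_Icc_le hg hg_anti hg_top hIcc
  rwa [setLIntegral_map_dist_Ici hg, Measure.restrict_smul, lintegral_smul_measure,
    setLIntegral_withDensity_deriv_Ici hV_mono hR, smul_eq_mul] at h

theorem le_tail_lintegral {g : ℝ → ℝ} {a : ℝ≥0∞} (hV : ContDiffOn ℝ 1 V (Ioi 0))
    (hV_mono : MonotoneOn V (Ioi 0)) (hR : 0 < R) (hVR : 0 ≤ V R)
    (hlow : ∀ s ≥ R, a * ENNReal.ofReal (V s) ≤ μ (ball x s))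
    (hg : ContinuousOn g (Ici R)) (hg_anti : StrictAntiOn g (Ici R))
    (hg_top : Tendsto g atTop (𝓝 0)) :
    a * (∫⁻ r in Ioi R, ENNReal.ofReal (deriv V r * g r))
      ≤ ∫⁻ y in {y | R ≤ dist x y}, ENNReal.ofReal (g (dist x y)) ∂μ
        + μ (ball x R) * ENNReal.ofReal (g R) := by
  have hIcc : ∀ s, R ≤ s →
      (a • volume.withDensity (fun r => ENNReal.ofReal (deriv V r))) (Icc R s)
        ≤ μ.map (dist x) (Icc R s) + μ (ball x R) := fun s hRs => by
    rw [Measure.map_apply (measurable_dist_left x) measurableSet_Icc, Measure.smul_apply,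
      smul_eq_mul, withDensity_deriv_Icc hV hV_mono hR hRs]
    have hcover : ball x s ⊆ dist x ⁻¹' Icc R s ∪ ball x R := fun y hy => by
      by_cases hRy : R ≤ dist x y
      · exact Or.inl ⟨hRy, (mem_ball'.1 hy).le⟩
      · exact Or.inr (mem_ball'.2 (not_le.1 hRy))
    calc a * ENNReal.ofReal (V s - V R) ≤ a * ENNReal.ofReal (V s) :=
          mul_le_mul_right (ofReal_le_ofReal (sub_le_self _ hVR)) a
      _ ≤ μ (ball x s) := hlow s hRs
      _ ≤ μ (dist x ⁻¹' Icc R s) + μ (ball x R) :=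
          (measure_mono hcover).trans (measure_union_le _ _)
  have h := lintegral_Ici_le_of_measure_Icc_le hg hg_anti hg_top hIcc
  rwa [setLIntegral_map_dist_Ici hg, Measure.restrict_smul, lintegral_smul_measure,
    setLIntegral_withDensity_deriv_Ici hV_mono hR, smul_eq_mul] at h

end TailEstimates

section Mollifiers

variable {X : Type*} [PseudoMetricSpace X] [MeasurableSpace X] [OpensMeasurableSpace X]
  {μ : Measure X} {x : X} {V : ℝ → ℝ} {R : ℝ} {ρ : ℕ → ℝ → ℝ} {J : ℝ≥0∞}

theorem limsup_tail_lintegral_le {b : ℝ≥0∞} (hV : ContDiffOn ℝ 1 V (Ioi 0))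
    (hV_mono : MonotoneOn V (Ioi 0)) (hρ : ∀ n, ContinuousOn (ρ n) (Ioi 0))
    (hρ_anti : ∀ n, StrictAntiOn (ρ n) (Ioi 0)) (hρ_top : ∀ n, Tendsto (ρ n) atTop (𝓝 0))
    (hR : 0 < R) (hVR : 0 ≤ V R) (hb : b ≠ ∞)
    (hup : ∀ s ≥ R, μ (ball x s) ≤ b * ENNReal.ofReal (V s))
    (hρR : Tendsto (fun n => ρ n R) atTop (𝓝 0))
    (hJ : Tendsto (fun n => ∫⁻ r in Ioi R, ENNReal.ofReal (deriv V r * ρ n r)) atTop (𝓝 J)) :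
    limsup (fun n => ∫⁻ y in {y | R ≤ dist x y}, ENNReal.ofReal (ρ n (dist x y)) ∂μ) atTop
      ≤ b * J := by
  have hbound : Tendsto (fun n => b * (∫⁻ r in Ioi R, ENNReal.ofReal (deriv V r * ρ n r))
      + b * ENNReal.ofReal (V R) * ENNReal.ofReal (ρ n R)) atTop (𝓝 (b * J)) := by
    simpa using (ENNReal.Tendsto.const_mul hJ (Or.inr hb)).add (ENNReal.Tendsto.const_mul
      (ENNReal.tendsto_ofReal hρR) (Or.inr (mul_ne_top hb ofReal_ne_top)))
  rw [← hbound.limsup_eq]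
  have hIci : Ici R ⊆ Ioi 0 := fun r hr => hR.trans_le hr
  exact limsup_le_limsup (Eventually.of_forall fun n => tail_lintegral_le hV hV_mono hR hVR hb
    hup ((hρ n).mono hIci) ((hρ_anti n).mono hIci) (hρ_top n))

theorem le_liminf_tail_lintegral {a : ℝ≥0∞} (hV : ContDiffOn ℝ 1 V (Ioi 0))
    (hV_mono : MonotoneOn V (Ioi 0)) (hρ : ∀ n, ContinuousOn (ρ n) (Ioi 0))
    (hρ_anti : ∀ n, StrictAntiOn (ρ n) (Ioi 0)) (hρ_top : ∀ n, Tendsto (ρ n) atTop (𝓝 0))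
    (hR : 0 < R) (hVR : 0 ≤ V R) (ha : a ≠ ∞)
    (hlow : ∀ s ≥ R, a * ENNReal.ofReal (V s) ≤ μ (ball x s)) (hball : μ (ball x R) ≠ ∞)
    (hρR : Tendsto (fun n => ρ n R) atTop (𝓝 0))
    (hJ : Tendsto (fun n => ∫⁻ r in Ioi R, ENNReal.ofReal (deriv V r * ρ n r)) atTop (𝓝 J)) :
    a * J
      ≤ liminf (fun n => ∫⁻ y in {y | R ≤ dist x y}, ENNReal.ofReal (ρ n (dist x y)) ∂μ) atTop := by
  have hbound : Tendsto (fun n => a * (∫⁻ r in Ioi R, ENNReal.ofReal (deriv V r * ρ n r))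
      - μ (ball x R) * ENNReal.ofReal (ρ n R)) atTop (𝓝 (a * J)) := by
    have herr : Tendsto (fun n => μ (ball x R) * ENNReal.ofReal (ρ n R)) atTop (𝓝 0) := by
      simpa using ENNReal.Tendsto.const_mul (ENNReal.tendsto_ofReal hρR) (Or.inr hball)
    simpa using ENNReal.Tendsto.sub (ENNReal.Tendsto.const_mul hJ (Or.inr ha)) herr
      (Or.inr zero_ne_top)
  rw [← hbound.liminf_eq]
  have hIci : Ici R ⊆ Ioi 0 := fun r hr => hR.trans_le hr
  exact liminf_le_liminf (Eventually.of_forall fun n => tsub_le_iff_right.2 <|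
    le_tail_lintegral hV hV_mono hR hVR hlow ((hρ n).mono hIci) ((hρ_anti n).mono hIci)
      (hρ_top n))

end Mollifiers

theorem radial_mollifiers_tail_integral_AVR_general
    {X : Type*} [MetricSpace X] [MeasurableSpace X] [BorelSpace X]
    (μ : Measure X)
    -- `V` is a `C¹` strictly increasing function on `[0,∞)` with `V(t) → ∞`
    (V : ℝ → ℝ) (hVmono : StrictMonoOn V (Set.Ici 0))
    (hVC1 : ContDiffOn ℝ 1 V (Set.Ici 0)) (hVtop : Tendsto V atTop atTop)
    -- generalized asymptotic volume ratio associated to `V`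
    (AVR : ℝ≥0∞)
    (hAVR : ∀ x₀ : X, Tendsto (fun r : ℝ => μ (ball x₀ r) / ENNReal.ofReal (V r))
      atTop (nhds AVR))
    -- volume upper bound `m(B_r(x)) ≤ k V(r)` for all large `r`
    (k : ℝ)
    (hvol : ∃ R₁ : ℝ, ∀ (x : X), ∀ r ≥ R₁, μ (ball x r) ≤ ENNReal.ofReal (k * V r))
    -- Condition 3: mollifiers of radial type, approximation of the identity associated to `V`
    (ρt : ℕ → ℝ → ℝ)
    (hρ_anti : ∀ n, StrictAntiOn (ρt n) (Set.Ioi 0))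
    (hρ_C1 : ∀ n, ContDiffOn ℝ 1 (ρt n) (Set.Ioi 0))
    -- Condition 3 (A)
    (hρ_lim : ∀ r > (0:ℝ), Tendsto (fun n => ρt n r) atTop (nhds 0))
    (hρ_V : ∀ n, Tendsto (fun r => ρt n r * V r) atTop (nhds 0))
    -- Condition 3 (C): `lim_{R→∞} lim_{n→∞} ∫_R^∞ S(r) ρ̃_n(r) dr = 1`
    (I : ℝ → ℝ)
    (hI : ∀ R > (0:ℝ), Tendsto (fun n => ∫ r in Set.Ioi R, deriv V r * ρt n r) atTop (nhds (I R)))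
    (hI_one : Tendsto I atTop (nhds 1)) :
    ∀ x : X,
      Tendsto (fun R : ℝ =>
          limsup (fun n =>
            ∫⁻ y in {y | R ≤ dist x y}, ENNReal.ofReal (ρt n (dist x y)) ∂μ) atTop)
        atTop (nhds AVR) ∧
      Tendsto (fun R : ℝ =>
          liminf (fun n =>
            ∫⁻ y in {y | R ≤ dist x y}, ENNReal.ofReal (ρt n (dist x y)) ∂μ) atTop)
        atTop (nhds AVR) := by
  intro x
  have hV : ContDiffOn ℝ 1 V (Ioi 0) := hVC1.mono Ioi_subset_Ici_self
  have hV_mono : MonotoneOn V (Ioi 0) := hVmono.monotoneOn.mono Ioi_subset_Ici_self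
  have hρ : ∀ n, ContinuousOn (ρt n) (Ioi 0) := fun n => (hρ_C1 n).continuousOn
  have hρ_top : ∀ n, Tendsto (ρt n) atTop (𝓝 0) := fun n =>
    tendsto_zero_of_tendsto_mul_atTop (hρ_V n) hVtop
  have hρ_nonneg : ∀ n, ∀ r > 0, 0 ≤ ρt n r := fun n r hr =>
    ((hρ_anti n).antitoneOn.mono (Ici_subset_Ioi.2 hr)).le_of_tendsto_atTop (hρ_top n)
  have hJ : ∀ R > 0, I R ≠ 0 → Tendsto (fun n => ∫⁻ r in Ioi R,
      ENNReal.ofReal (deriv V r * ρt n r)) atTop (𝓝 (ENNReal.ofReal (I R))) := fun R hR hIR =>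
    tendsto_lintegral_ofReal_of_tendsto_integral (fun n => (ae_restrict_iff' measurableSet_Ioi).2
      (ae_of_all _ fun r hr => mul_nonneg (deriv_nonneg_of_monotoneOn_Ioi hV_mono (hR.trans hr))
        (hρ_nonneg n r (hR.trans hr)))) (hI R hR) hIR
  have hgood : ∀ᶠ R in atTop, 0 < R ∧ 0 ≤ V R ∧ I R ≠ 0 :=
    (eventually_gt_atTop 0).and
      ((hVtop.eventually_ge_atTop 0).and (hI_one.eventually_ne one_ne_zero))
  have hlimsup : ∀ b > AVR, b ≠ ∞ → ∀ᶠ R in atTop, limsup (fun n =>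
      ∫⁻ y in {y | R ≤ dist x y}, ENNReal.ofReal (ρt n (dist x y)) ∂μ) atTop
        ≤ b * ENNReal.ofReal (I R) := fun b hb hb_top => by
    filter_upwards [hgood, eventually_forall_ge_atTop.2
      (ENNReal.eventually_le_mul_of_tendsto_div (hAVR x) hb hb_top fun _ => ofReal_ne_top)]
      with R ⟨hR, hVR, hIR⟩ hup
    exact limsup_tail_lintegral_le hV hV_mono hρ hρ_anti hρ_top hR hVR hb_top hup (hρ_lim R hR)
      (hJ R hR hIR)
  have hliminf : ∀ a < AVR, ∀ᶠ R in atTop, a * ENNReal.ofReal (I R) ≤ liminf (fun n =>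
      ∫⁻ y in {y | R ≤ dist x y}, ENNReal.ofReal (ρt n (dist x y)) ∂μ) atTop := fun a ha => by
    obtain ⟨R₁, hR₁⟩ := hvol
    filter_upwards [hgood, eventually_forall_ge_atTop.2
      (ENNReal.eventually_mul_le_of_tendsto_div (hAVR x) ha), eventually_ge_atTop R₁]
      with R ⟨hR, hVR, hIR⟩ hlow hR₁R
    exact le_liminf_tail_lintegral hV hV_mono hρ hρ_anti hρ_top hR hVR ha.ne_top hlow
      (ne_top_of_le_ne_top ofReal_ne_top (hR₁ x R hR₁R)) (hρ_lim R hR) (hJ R hR hIR)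
  have hI' : Tendsto (fun R => ENNReal.ofReal (I R)) atTop (𝓝 1) := by
    simpa using ENNReal.tendsto_ofReal hI_one
  exact ⟨ENNReal.tendsto_of_eventually_mul_le hI'
      (fun a ha => (hliminf a ha).mono fun _ h => h.trans liminf_le_limsup) hlimsup,
    ENNReal.tendsto_of_eventually_mul_le hI' hliminf
      fun b hb hb_top => (hlimsup b hb hb_top).mono fun _ h => le_trans liminf_le_limsup h⟩

/-- Part (A) of Lemma 2.11: under the volume growth assumptions and Condition 3, for every
`x ∈ X` the tail integrals of the radial mollifiers converge (in the iterated
`lim_{R→∞} limsup/liminf_{n→∞}` sense) to the generalized asymptotic volume ratio. -/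
theorem radial_mollifiers_tail_integral_AVR
    {X : Type*} [MetricSpace X] [CompleteSpace X] [TopologicalSpace.SeparableSpace X]
    [MeasurableSpace X] [BorelSpace X]
    (μ : Measure X) [IsLocallyFiniteMeasure μ] [μ.IsOpenPosMeasure]
    -- `V` is a `C¹` strictly increasing function on `[0,∞)` with `V(t) → ∞`
    (V : ℝ → ℝ) (hV0 : 0 ≤ V 0) (hVmono : StrictMonoOn V (Set.Ici 0))
    (hVC1 : ContDiffOn ℝ 1 V (Set.Ici 0)) (hVtop : Tendsto V atTop atTop)
    -- generalized asymptotic volume ratio associated to `V`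
    (AVR : ℝ≥0∞)
    (hAVR : ∀ x₀ : X, Tendsto (fun r : ℝ => μ (ball x₀ r) / ENNReal.ofReal (V r))
      atTop (nhds AVR))
    -- volume upper bound `m(B_r(x)) ≤ k V(r)` for all large `r`
    (k : ℝ) (hk : 0 < k)
    (hvol : ∃ R₁ : ℝ, ∀ (x : X), ∀ r ≥ R₁, μ (ball x r) ≤ ENNReal.ofReal (k * V r))
    -- Condition 3: mollifiers of radial type, approximation of the identity associated to `V`
    (ρt : ℕ → ℝ → ℝ)
    (hρ_nonneg : ∀ (n : ℕ), ∀ r > (0:ℝ), 0 ≤ ρt n r)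
    (hρ_anti : ∀ n, StrictAntiOn (ρt n) (Set.Ioi 0))
    (hρ_C1 : ∀ n, ContDiffOn ℝ 1 (ρt n) (Set.Ioi 0))
    -- Condition 3 (A)
    (hρ_lim : ∀ r > (0:ℝ), Tendsto (fun n => ρt n r) atTop (nhds 0))
    (hρ_V : ∀ n, Tendsto (fun r => ρt n r * V r) atTop (nhds 0))
    -- Condition 3 (B)
    (hρ_ratio : ∀ i j : ℕ, i < j → MonotoneOn (fun r => ρt j r / ρt i r) (Set.Ioi 0))
    -- Condition 3 (C): `lim_{R→∞} lim_{n→∞} ∫_R^∞ S(r) ρ̃_n(r) dr = 1`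
    (I : ℝ → ℝ)
    (hI : ∀ R > (0:ℝ), Tendsto (fun n => ∫ r in Set.Ioi R, deriv V r * ρt n r) atTop (nhds (I R)))
    (hI_one : Tendsto I atTop (nhds 1)) :
    ∀ x : X,
      Tendsto (fun R : ℝ =>
          limsup (fun n =>
            ∫⁻ y in {y | R ≤ dist x y}, ENNReal.ofReal (ρt n (dist x y)) ∂μ) atTop)
        atTop (nhds AVR) ∧
      Tendsto (fun R : ℝ =>
          liminf (fun n =>
            ∫⁻ y in {y | R ≤ dist x y}, ENNReal.ofReal (ρt n (dist x y)) ∂μ) atTop)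
        atTop (nhds AVR) :=
  radial_mollifiers_tail_integral_AVR_general μ V hVmono hVC1 hVtop AVR hAVR k hvol ρt hρ_anti hρ_C1
    hρ_lim hρ_V I hI hI_one
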